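/- Rayleigh monotonicity under embedding: let (G, R) and (Ḡ, R̄) be finite connected generalized electrical networks such that G can be embedded in Ḡ via an injection η, and R_e ≥ R̄_{η(e)} (Loewner order) for every edge e of G. Then for every pair of nodes u, v of G, R^eff_{u,v}(G, R) ≥ R̄^eff_{η(u),η(v)}(Ḡ, R̄). -/

import Mathlib

/-! The unit current `i` of `(G, R)`, extended by zero along `η`, is a unit flow on `G'`.
The energy `∑ iᵀ R i` of a unit current is `2 • Reff` (each edge is counted in both
orientations), and by Thomson's principle the energy of any unit flow on `G'` exceeds that of
the unit current of `(G', R')` by the energy of their difference, a circulation. Hence, using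
`R ≥ R' ∘ η` edgewise,
`2 • Reff = E_R(i) ≥ E_{R' ∘ η}(i) = E_{R'}(η_* i) ≥ 2 • Reff'`. -/

/-- `Reff` is the generalized (matrix-valued) effective resistance between `u` and `v`
in the generalized electrical network `(G, R)` (matrix Kirchhoff and Ohm laws). -/
def IsEffRes {V : Type*} [Fintype V] [DecidableEq V] {k : ℕ} (G : SimpleGraph V)
    (R : V → V → Matrix (Fin k) (Fin k) ℝ) (u v : V)
    (Reff : Matrix (Fin k) (Fin k) ℝ) : Prop :=
  ∀ J : Matrix (Fin k) (Fin k) ℝ,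
    ∃ i : V → V → Matrix (Fin k) (Fin k) ℝ, ∃ p : V → Matrix (Fin k) (Fin k) ℝ,
      (∀ a b, i b a = - i a b) ∧
      (∀ a b, ¬ G.Adj a b → i a b = 0) ∧
      (∀ a, ∑ b, i a b = (if a = u then J else 0) - (if a = v then J else 0)) ∧
      (∀ a b, G.Adj a b → R a b * i a b = p a - p b) ∧
      p u - p v = Reff * J

open Matrix Finset

section Flow

variable {V : Type*} [Fintype V] {m : Type*} {α : Type*} [CommRing α]

section

variable [DecidableEq V]

structure IsFlow (G : SimpleGraph V) (s t : V) (J : Matrix m m α) (f : V → V → Matrix m m α) :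
    Prop where
  antisymm : ∀ a b, f b a = -f a b
  eq_zero_of_not_adj : ∀ a b, ¬ G.Adj a b → f a b = 0
  sum_eq : ∀ a, ∑ b, f a b = (if a = s then J else 0) - (if a = t then J else 0)

theorem IsFlow.sub {G : SimpleGraph V} {s t : V} {J J' : Matrix m m α}
    {f g : V → V → Matrix m m α} (hf : IsFlow G s t J f) (hg : IsFlow G s t J' g) :
    IsFlow G s t (J - J') (f - g) where
  antisymm a b := by simp only [Pi.sub_apply, hf.antisymm a b, hg.antisymm a b]; abel
  eq_zero_of_not_adj a b h := by
    simp only [Pi.sub_apply, hf.eq_zero_of_not_adj a b h, hg.eq_zero_of_not_adj a b h, sub_zero]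
  sum_eq a := by
    simp only [Pi.sub_apply, sum_sub_distrib, hf.sum_eq, hg.sum_eq]
    split_ifs <;> abel

end

variable [Fintype m]

def energy (R f : V → V → Matrix m m α) : Matrix m m α :=
  ∑ a, ∑ b, (f a b)ᵀ * R a b * f a b

theorem energy_sub (R R' f : V → V → Matrix m m α) :
    energy (R - R') f = energy R f - energy R' f := by
  simp only [energy, ← sum_sub_distrib, Pi.sub_apply, mul_sub, sub_mul]

theorem sum_sum_transpose_mul_sub_of_antisymm {f : V → V → Matrix m m α}
    (hf : ∀ a b, f b a = -f a b) (p : V → Matrix m m α) :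
    ∑ a, ∑ b, (f a b)ᵀ * (p a - p b) = 2 • ∑ a, (∑ b, f a b)ᵀ * p a := by
  have hswap : ∑ a, ∑ b, (f a b)ᵀ * p b = -∑ a, (∑ b, f a b)ᵀ * p a := by
    rw [sum_comm, ← sum_neg_distrib]
    refine sum_congr rfl fun b _ => ?_
    rw [transpose_sum, sum_mul, ← sum_neg_distrib]
    exact sum_congr rfl fun a _ => by rw [hf b a, transpose_neg, neg_mul]
  simp only [mul_sub, sum_sub_distrib, hswap, transpose_sum, sum_mul]
  abel

variable [DecidableEq V] {G : SimpleGraph V} {s t : V} {J : Matrix m m α}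
  {f g R : V → V → Matrix m m α} {p : V → Matrix m m α}

theorem IsFlow.sum_sum_transpose_mul_sub (hf : IsFlow G s t J f) (p : V → Matrix m m α) :
    ∑ a, ∑ b, (f a b)ᵀ * (p a - p b) = 2 • (Jᵀ * (p s - p t)) := by
  rw [sum_sum_transpose_mul_sub_of_antisymm hf.antisymm, mul_sub]
  simp [hf.sum_eq, transpose_sub, apply_ite transpose, sub_mul, ite_mul, sum_sub_distrib]

theorem IsFlow.energy_eq_of_ohm (hf : IsFlow G s t J f)
    (hohm : ∀ a b, G.Adj a b → R a b * f a b = p a - p b) :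
    energy R f = 2 • (Jᵀ * (p s - p t)) := by
  rw [← hf.sum_sum_transpose_mul_sub p, energy]
  refine sum_congr rfl fun a _ => sum_congr rfl fun b _ => ?_
  by_cases h : G.Adj a b
  · rw [Matrix.mul_assoc, hohm a b h]
  · simp [hf.eq_zero_of_not_adj a b h]

theorem IsFlow.energy_eq_add_energy_sub (hR : ∀ a b, G.Adj a b → (R a b).IsSymm)
    (hf : IsFlow G s t J f) (hg : IsFlow G s t J g)
    (hohm : ∀ a b, G.Adj a b → R a b * g a b = p a - p b) :
    energy R f = energy R g + energy R (f - g) := by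
  set d := f - g
  have hd : IsFlow G s t 0 d := sub_self J ▸ hf.sub hg
  -- `R g` is a potential difference and `d` a circulation, so they are orthogonal.
  have hcross : ∑ a, ∑ b, (d a b)ᵀ * (R a b * g a b) = 0 := by
    calc _ = ∑ a, ∑ b, (d a b)ᵀ * (p a - p b) := by
          refine sum_congr rfl fun a _ => sum_congr rfl fun b _ => ?_
          by_cases h : G.Adj a b
          · rw [hohm a b h]
          · simp [hd.eq_zero_of_not_adj a b h]
      _ = 0 := by simpa using hd.sum_sum_transpose_mul_sub p
  have hcross' : ∑ a, ∑ b, (g a b)ᵀ * (R a b * d a b) = 0 := by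
    rw [← transpose_zero, ← hcross, transpose_sum]
    refine sum_congr rfl fun a _ => ?_
    rw [transpose_sum]
    refine sum_congr rfl fun b _ => ?_
    by_cases h : G.Adj a b
    · rw [transpose_mul, transpose_mul, transpose_transpose, (hR a b h).eq, Matrix.mul_assoc]
    · simp [hd.eq_zero_of_not_adj a b h]
  have hfgd : f = g + d := (add_sub_cancel g f).symm
  calc energy R f = energy R g + energy R d + ∑ a, ∑ b, (g a b)ᵀ * (R a b * d a b)
        + ∑ a, ∑ b, (d a b)ᵀ * (R a b * g a b) := by
        simp only [energy, hfgd, Pi.add_apply, transpose_add, add_mul, mul_add,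
          sum_add_distrib, Matrix.mul_assoc]
        abel
    _ = energy R g + energy R d := by rw [hcross, hcross', add_zero, add_zero]

end Flow

section Pushforward

variable {V W : Type*} {η : V → W} {M : Type*} [Zero M]

noncomputable def pushforward (η : V → W) (f : V → V → M) : W → W → M :=
  Function.extend η (fun a => Function.extend η (f a) 0) 0

theorem pushforward_apply_apply (hη : Function.Injective η) (f : V → V → M) (a b : V) :
    pushforward η f (η a) (η b) = f a b := by
  simp only [pushforward, hη.extend_apply]

theorem pushforward_apply_eq_zero (hη : Function.Injective η) (f : V → V → M) {w w' : W}
    (h : w ∉ Set.range η ∨ w' ∉ Set.range η) : pushforward η f w w' = 0 := by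
  by_cases hw : w ∈ Set.range η
  · obtain ⟨a, rfl⟩ := hw
    rw [pushforward, hη.extend_apply]
    exact Function.extend_apply' _ _ _ (h.resolve_left (not_not.2 ⟨a, rfl⟩))
  · rw [pushforward, Function.extend_apply' _ _ _ hw, Pi.zero_apply, Pi.zero_apply]

end Pushforward

theorem IsFlow.pushforward {V W : Type*} [Fintype V] [DecidableEq V] [Fintype W]
    [DecidableEq W] {m α : Type*} [CommRing α] {G : SimpleGraph V} {G' : SimpleGraph W}
    {η : V → W} {s t : V} {J : Matrix m m α} {f : V → V → Matrix m m α}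
    (hη : Function.Injective η) (hadj : ∀ a b, G.Adj a b → G'.Adj (η a) (η b))
    (hf : IsFlow G s t J f) : IsFlow G' (η s) (η t) J (pushforward η f) where
  antisymm w w' := by
    by_cases h : w ∈ Set.range η ∧ w' ∈ Set.range η
    · obtain ⟨⟨a, rfl⟩, ⟨b, rfl⟩⟩ := h
      simp only [pushforward_apply_apply hη, hf.antisymm a b]
    · rw [not_and_or] at h
      rw [pushforward_apply_eq_zero hη f h, pushforward_apply_eq_zero hη f h.symm, neg_zero]
  eq_zero_of_not_adj w w' hww' := by
    by_cases h : w ∈ Set.range η ∧ w' ∈ Set.range η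
    · obtain ⟨⟨a, rfl⟩, ⟨b, rfl⟩⟩ := h
      rw [pushforward_apply_apply hη]
      exact hf.eq_zero_of_not_adj a b fun hab => hww' (hadj a b hab)
    · exact pushforward_apply_eq_zero hη f (not_and_or.1 h)
  sum_eq w := by
    by_cases hw : w ∈ Set.range η
    · obtain ⟨a, rfl⟩ := hw
      rw [← Fintype.sum_of_injective η hη (f a) _
        (fun w' hw' => pushforward_apply_eq_zero hη f (Or.inr hw'))
        (fun b => (pushforward_apply_apply hη f a b).symm), hf.sum_eq]
      simp only [hη.eq_iff]
    · have hne : ∀ a, w ≠ η a := fun a h => hw ⟨a, h.symm⟩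
      simp [pushforward_apply_eq_zero hη f (Or.inl hw), hne]

theorem energy_pushforward {V W : Type*} [Fintype V] [Fintype W] {m α : Type*} [Fintype m]
    [CommRing α] {η : V → W} (hη : Function.Injective η) (R : W → W → Matrix m m α)
    (f : V → V → Matrix m m α) :
    energy R (pushforward η f) = energy (fun a b => R (η a) (η b)) f := by
  refine (Fintype.sum_of_injective η hη _ _ (fun w hw => ?_) fun a => ?_).symm
  · simp [pushforward_apply_eq_zero hη f (Or.inl hw)]
  · refine Fintype.sum_of_injective η hη _ _ (fun w' hw' => ?_) fun b => ?_
    · simp [pushforward_apply_eq_zero hη f (Or.inr hw')]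
    · rw [pushforward_apply_apply hη]

theorem posSemidef_of_two_nsmul {m : Type*} {A : Matrix m m ℝ} (h : (2 • A).PosSemidef) :
    A.PosSemidef := by
  have h' := h.smul (show (0 : ℝ) ≤ 2⁻¹ by norm_num)
  rwa [two_nsmul, ← two_smul ℝ, smul_smul, inv_mul_cancel₀ two_ne_zero, one_smul] at h'

theorem energy_posSemidef {V m : Type*} [Fintype V] [Fintype m] {G : SimpleGraph V} {R f : V → V → Matrix m m ℝ}
    (hR : ∀ a b, G.Adj a b → (R a b).PosSemidef) (hf : ∀ a b, ¬ G.Adj a b → f a b = 0) :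
    (energy R f).PosSemidef := by
  refine posSemidef_sum _ fun a _ => posSemidef_sum _ fun b _ => ?_
  by_cases h : G.Adj a b
  · simpa [conjTranspose_eq_transpose_of_trivial] using
      (hR a b h).conjTranspose_mul_mul_same (f a b)
  · simpa [hf a b h] using PosSemidef.zero

section EffectiveResistance

variable {V : Type*} [Fintype V] [DecidableEq V] {k : ℕ} {G : SimpleGraph V}
  {R : V → V → Matrix (Fin k) (Fin k) ℝ} {u v : V} {Reff : Matrix (Fin k) (Fin k) ℝ}

theorem IsEffRes.exists_unit_current (h : IsEffRes G R u v Reff) :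
    ∃ (i : V → V → Matrix (Fin k) (Fin k) ℝ) (p : V → Matrix (Fin k) (Fin k) ℝ),
      IsFlow G u v 1 i ∧ (∀ a b, G.Adj a b → R a b * i a b = p a - p b) ∧
      p u - p v = Reff := by
  obtain ⟨i, p, hanti, hzero, hsum, hohm, hReff⟩ := h 1
  exact ⟨i, p, ⟨hanti, hzero, hsum⟩, hohm, by rw [hReff, Matrix.mul_one]⟩

theorem IsEffRes.exists_isFlow_energy_eq (h : IsEffRes G R u v Reff) :
    ∃ i, IsFlow G u v 1 i ∧ energy R i = 2 • Reff := by
  obtain ⟨i, p, hi, hohm, hReff⟩ := h.exists_unit_current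
  exact ⟨i, hi, by rw [hi.energy_eq_of_ohm hohm, transpose_one, Matrix.one_mul, hReff]⟩

theorem IsEffRes.posSemidef_energy_sub (h : IsEffRes G R u v Reff)
    (hR : ∀ a b, G.Adj a b → (R a b).PosSemidef) {f : V → V → Matrix (Fin k) (Fin k) ℝ}
    (hf : IsFlow G u v 1 f) : (energy R f - 2 • Reff).PosSemidef := by
  obtain ⟨i, p, hi, hohm, hReff⟩ := h.exists_unit_current
  have hsymm : ∀ a b, G.Adj a b → (R a b).IsSymm := fun a b hab =>
    isHermitian_iff_isSymm.1 (hR a b hab).isHermitian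
  rw [hf.energy_eq_add_energy_sub hsymm hi hohm, hi.energy_eq_of_ohm hohm, transpose_one,
    Matrix.one_mul, hReff, add_sub_cancel_left]
  exact energy_posSemidef hR (hf.sub hi).eq_zero_of_not_adj

end EffectiveResistance

theorem effRes_rayleigh_monotonicity_general {V W : Type*}
    [Fintype V] [DecidableEq V] [Fintype W] [DecidableEq W] {k : ℕ}
    (G : SimpleGraph V) (G' : SimpleGraph W)
    (η : V → W) (hinj : Function.Injective η)
    (hadj : ∀ a b : V, G.Adj a b → G'.Adj (η a) (η b))
    (R : V → V → Matrix (Fin k) (Fin k) ℝ) (R' : W → W → Matrix (Fin k) (Fin k) ℝ)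
    (hR'pos : ∀ a b, G'.Adj a b → (R' a b).PosDef)
    (hle : ∀ a b : V, G.Adj a b → (R a b - R' (η a) (η b)).PosSemidef)
    (u v : V) (Reff Reff' : Matrix (Fin k) (Fin k) ℝ)
    (h1 : IsEffRes G R u v Reff)
    (h2 : IsEffRes G' R' (η u) (η v) Reff') :
    (Reff - Reff').PosSemidef := by
  set Rη : V → V → Matrix (Fin k) (Fin k) ℝ := fun a b => R' (η a) (η b)
  obtain ⟨i, hi, hEi⟩ := h1.exists_isFlow_energy_eq
  have hThomson : (energy Rη i - 2 • Reff').PosSemidef := by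
    simpa only [energy_pushforward hinj] using
      h2.posSemidef_energy_sub (fun a b hab => (hR'pos a b hab).posSemidef)
        (hi.pushforward hinj hadj)
  have hLoewner : (energy R i - energy Rη i).PosSemidef := by
    rw [← energy_sub]
    exact energy_posSemidef hle hi.eq_zero_of_not_adj
  have hsplit : 2 • (Reff - Reff') =
      (energy R i - energy Rη i) + (energy Rη i - 2 • Reff') := by
    rw [hEi, smul_sub]
    abel
  exact posSemidef_of_two_nsmul (hsplit ▸ hLoewner.add hThomson)

/-- Rayleigh monotonicity under embedding: if G embeds in G' via an
injective adjacency-preserving map η, each edge resistance of G dominates (Loewner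
order) the resistance of the corresponding edge of G', and all edge resistances are
symmetric positive definite, then R^eff_{u,v}(G,R) ≥ R'^eff_{η u, η v}(G',R'). -/
theorem effRes_rayleigh_monotonicity {V W : Type*}
    [Fintype V] [DecidableEq V] [Fintype W] [DecidableEq W] {k : ℕ}
    (G : SimpleGraph V) (G' : SimpleGraph W) (hG : G.Connected) (hG' : G'.Connected)
    (η : V → W) (hinj : Function.Injective η)
    (hadj : ∀ a b : V, G.Adj a b → G'.Adj (η a) (η b))
    (R : V → V → Matrix (Fin k) (Fin k) ℝ) (R' : W → W → Matrix (Fin k) (Fin k) ℝ)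
    (hRsym : ∀ a b, R a b = R b a) (hR'sym : ∀ a b, R' a b = R' b a)
    (hRpos : ∀ a b, G.Adj a b → (R a b).PosDef)
    (hR'pos : ∀ a b, G'.Adj a b → (R' a b).PosDef)
    (hle : ∀ a b : V, G.Adj a b → (R a b - R' (η a) (η b)).PosSemidef)
    (u v : V) (Reff Reff' : Matrix (Fin k) (Fin k) ℝ)
    (h1 : IsEffRes G R u v Reff)
    (h2 : IsEffRes G' R' (η u) (η v) Reff') :
    (Reff - Reff').PosSemidef :=
  effRes_rayleigh_monotonicity_general G G' η hinj hadj R R' hR'pos hle u v Reff Reff' h1 h2
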